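/- Let A be a flat of the Catalan matroid C_n of rank n − 2, and let x be the smallest integer with ht_A(x) = −1. Then the number of flats of C_n of rank n − 1 that contain A is exactly (x + 3)/2. -/

import Mathlib

/-- Height of the path with up-step set `A` after `x` steps: `2·|A ∩ {1,…,x}| − x`. -/
def ht (A : Finset ℕ) (x : ℕ) : ℤ := 2 * (A ∩ Finset.Icc 1 x).card - x

/-- `P` is the up-step set of a Dyck path of length `2n`. -/
def IsDyck (n : ℕ) (P : Finset ℕ) : Prop :=
  P ⊆ Finset.Icc 1 (2 * n) ∧ P.card = n ∧ ∀ x ≤ 2 * n, 0 ≤ ht P x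

/-- The rank of `A` in the Catalan matroid: the maximum of `|A ∩ B|` over bases `B`. -/
noncomputable def catalanRank (n : ℕ) (A : Finset ℕ) : ℕ :=
  sSup {m : ℕ | ∃ B : Finset ℕ, IsDyck n B ∧ (A ∩ B).card = m}

/-- `A` is a flat of the Catalan matroid: adding any element of the ground set outside
`A` strictly increases the rank. -/
def IsCatalanFlat (n : ℕ) (A : Finset ℕ) : Prop :=
  A ⊆ Finset.Icc 1 (2 * n) ∧
  ∀ y ∈ Finset.Icc 1 (2 * n), y ∉ A → catalanRank n A < catalanRank n (insert y A)

/-!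
For `A ⊆ {1,…,2n}` the rank is read off the lowest point of the path: `n - t ≤ rank A` exactly
when `ht_A ≥ -2t` on `[0, 2n]`. Where `A` dips below `-2t` a basis is still nonnegative, so it has
more than `t` up-steps outside `A` before that point; conversely one extra up-step, placed at the
first descent below zero, lifts the rest of the path by `2`.
Hence, for a flat `A` of rank `n - 2`, the path of `A` stays `≥ -2` before each missing step.

A hyperplane `F ⊇ A` either contains a step `y ≤ x` outside `A`, and then `F = A ∪ {y}` since any
further step would lift the path to height `≥ 0` throughout; or `F` agrees with `A` on `[1, x]`,
so `ht_F(x) = -1` and flatness forces every later step into `F`. Both kinds are hyperplanes, giving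
`1 + |[1, x] \ A| = 1 + (x + 1)/2` of them.
-/

open Finset

section Height

lemma ht_zero (A : Finset ℕ) : ht A 0 = 0 := by simp [ht]

lemma ht_succ (A : Finset ℕ) (u : ℕ) :
    ht A (u + 1) = ht A u + if u + 1 ∈ A then 1 else -1 := by
  have hIcc : Icc 1 (u + 1) = insert (u + 1) (Icc 1 u) := by
    ext w; simp only [mem_Icc, mem_insert]; omega
  unfold ht
  rw [hIcc]
  split_ifs with hu
  · rw [inter_insert_of_mem hu, card_insert_of_notMem (by simp)]
    push_cast; ring
  · rw [inter_insert_of_notMem hu]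
    push_cast; ring

lemma ht_of_subset_Icc {A : Finset ℕ} {u : ℕ} (h : A ⊆ Icc 1 u) : ht A u = 2 * A.card - u := by
  rw [ht, inter_eq_left.2 h]

lemma ht_insert {A : Finset ℕ} {y : ℕ} (hy : 1 ≤ y) (hyA : y ∉ A) (u : ℕ) :
    ht (insert y A) u = ht A u + if y ≤ u then 2 else 0 := by
  unfold ht
  split_ifs with hyu
  · rw [insert_inter_of_mem (mem_Icc.2 ⟨hy, hyu⟩), card_insert_of_notMem (by simp [hyA])]
    push_cast; ring
  · rw [insert_inter_of_notMem (by simp [hyu])]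
    ring

lemma ht_nonneg_of_forall_ne_neg_one {A : Finset ℕ} {x : ℕ} (h : ∀ y < x, ht A y ≠ -1) :
    ∀ u < x, 0 ≤ ht A u
  | 0, _ => (ht_zero A).ge
  | u + 1, hu => by
    have hprev := ht_nonneg_of_forall_ne_neg_one h u (by omega)
    have hne := h (u + 1) hu
    rw [ht_succ] at hne ⊢
    split_ifs at hne ⊢ <;> omega

lemma exists_notMem_of_ht_neg {A : Finset ℕ} {x : ℕ} (hx : ht A x < 0) :
    ∃ u ∈ Icc 1 x, u ∉ A ∧ ∀ v < u, 0 ≤ ht A v := by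
  classical
  have hex : ∃ u, ht A u < 0 := ⟨x, hx⟩
  have hmin : ∀ v < Nat.find hex, 0 ≤ ht A v := fun v hv => not_lt.1 (Nat.find_min hex hv)
  obtain ⟨w, hw⟩ : ∃ w, Nat.find hex = w + 1 :=
    Nat.exists_eq_succ_of_ne_zero fun h0 => by simpa [h0, ht_zero] using Nat.find_spec hex
  refine ⟨w + 1, mem_Icc.2 ⟨by omega, hw ▸ Nat.find_min' hex hx⟩, fun hmem => ?_, hw ▸ hmin⟩
  have hneg := Nat.find_spec hex
  have hprev := hmin w (by omega)
  rw [hw, ht_succ, if_pos hmem] at hneg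
  omega

end Height

section Rank

variable {n : ℕ}

lemma isDyck_Icc (n : ℕ) : IsDyck n (Icc 1 n) := by
  refine ⟨Icc_subset_Icc le_rfl (by omega), by simp, fun u _ => ?_⟩
  have h : Icc 1 n ∩ Icc 1 u = Icc 1 (min n u) := by
    ext w; simp only [mem_inter, mem_Icc]; omega
  rw [ht, h, Nat.card_Icc]
  omega

lemma bddAbove_card_inter_isDyck (n : ℕ) (A : Finset ℕ) :
    BddAbove {m : ℕ | ∃ B : Finset ℕ, IsDyck n B ∧ (A ∩ B).card = m} := by
  refine ⟨n, ?_⟩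
  rintro m ⟨B, hB, rfl⟩
  exact (card_le_card inter_subset_right).trans hB.2.1.le

lemma le_catalanRank {A B : Finset ℕ} (hB : IsDyck n B) : (A ∩ B).card ≤ catalanRank n A :=
  le_csSup (bddAbove_card_inter_isDyck n A) ⟨B, hB, rfl⟩

lemma exists_isDyck_card_inter_eq_catalanRank (n : ℕ) (A : Finset ℕ) :
    ∃ B, IsDyck n B ∧ (A ∩ B).card = catalanRank n A := by
  have hne : {m : ℕ | ∃ B : Finset ℕ, IsDyck n B ∧ (A ∩ B).card = m}.Nonempty :=
    ⟨_, Icc 1 n, isDyck_Icc n, rfl⟩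
  exact Nat.sSup_mem hne (bddAbove_card_inter_isDyck n A)

lemma catalanRank_mono {A A' : Finset ℕ} (h : A ⊆ A') : catalanRank n A ≤ catalanRank n A' := by
  obtain ⟨B, hB, hAB⟩ := exists_isDyck_card_inter_eq_catalanRank n A
  exact hAB ▸ (card_le_card (inter_subset_inter_right h)).trans (le_catalanRank hB)

lemma catalanRank_insert_le (y : ℕ) (A : Finset ℕ) :
    catalanRank n (insert y A) ≤ catalanRank n A + 1 := by
  obtain ⟨B, hB, hAB⟩ := exists_isDyck_card_inter_eq_catalanRank n (insert y A)
  calc catalanRank n (insert y A) = (insert y A ∩ B).card := hAB.symm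
    _ ≤ (insert y (A ∩ B)).card := by
      rw [insert_inter_distrib]; exact card_le_card (inter_subset_inter_left (subset_insert y B))
    _ ≤ (A ∩ B).card + 1 := card_insert_le _ _
    _ ≤ catalanRank n A + 1 := by grw [le_catalanRank hB]

/-- A basis has at least `w / 2` up-steps in `[1, w]`, where `A` has fewer than `w / 2 - t`. -/
lemma catalanRank_lt_of_ht_lt {A : Finset ℕ} {t w : ℕ} (hw : w ≤ 2 * n)
    (h : ht A w < -2 * t) : (catalanRank n A : ℤ) < n - t := by
  obtain ⟨B, hB, hAB⟩ := exists_isDyck_card_inter_eq_catalanRank n A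
  have hsplit : (A ∩ B).card ≤ (A ∩ Icc 1 w).card + (B \ Icc 1 w).card := by
    refine (card_le_card fun a ha => ?_).trans (card_union_le _ _)
    simp only [mem_inter, mem_sdiff, mem_union] at ha ⊢
    tauto
  have hBcard := card_inter_add_card_sdiff B (Icc 1 w)
  have hBw := hB.2.2 w hw
  rw [hB.2.1] at hBcard
  unfold ht at h hBw
  omega

lemma exists_isDyck_subset {S : Finset ℕ} (hS : S ⊆ Icc 1 (2 * n))
    (h : ∀ u ≤ 2 * n, 0 ≤ ht S u) : ∃ B, IsDyck n B ∧ B ⊆ S := by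
  induction S using Finset.strongInduction with
  | H S ih =>
  have hcard : n ≤ S.card := by
    have := h (2 * n) le_rfl
    rw [ht_of_subset_Icc hS] at this
    omega
  rcases hcard.eq_or_lt with hc | hc
  · exact ⟨S, ⟨hS, hc.symm, h⟩, subset_rfl⟩
  have hne : S.Nonempty := card_pos.1 (by omega)
  have ha : S.max' hne ∈ S := max'_mem S hne
  have hht : ∀ u ≤ 2 * n, 0 ≤ ht (S.erase (S.max' hne)) u := by
    intro u hu
    have hins := ht_insert (mem_Icc.1 (hS ha)).1 (notMem_erase _ S) u
    rw [insert_erase ha] at hins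
    split_ifs at hins with hau
    · have hSu : S ⊆ Icc 1 u := fun s hs =>
        mem_Icc.2 ⟨(mem_Icc.1 (hS hs)).1, (le_max' S s hs).trans hau⟩
      rw [ht_of_subset_Icc hSu] at hins
      omega
    · have := h u hu
      omega
  obtain ⟨B, hB, hBS⟩ := ih _ (erase_ssubset ha) ((erase_subset _ S).trans hS) hht
  exact ⟨B, hB, hBS.trans (erase_subset _ S)⟩

lemma sub_le_catalanRank_of_ht_ge {A : Finset ℕ} (hA : A ⊆ Icc 1 (2 * n)) (t : ℕ)
    (h : ∀ u ≤ 2 * n, -2 * (t : ℤ) ≤ ht A u) : (n : ℤ) - t ≤ catalanRank n A := by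
  induction t generalizing A with
  | zero =>
    obtain ⟨B, hB, hBA⟩ := exists_isDyck_subset hA (by simpa using h)
    have := le_catalanRank (A := A) hB
    rw [inter_eq_right.2 hBA, hB.2.1] at this
    omega
  | succ t ih =>
    by_cases hneg : ∃ w ≤ 2 * n, ht A w < 0
    · obtain ⟨w, hw, hw0⟩ := hneg
      obtain ⟨u, hu, huA, hbefore⟩ := exists_notMem_of_ht_neg hw0
      have hu' := mem_Icc.1 hu
      have hins := ih (insert_subset (mem_Icc.2 ⟨hu'.1, by omega⟩) hA) fun v hv => by
        have := h v hv
        have := hbefore v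
        rw [ht_insert hu'.1 huA]
        split_ifs <;> omega
      have := catalanRank_insert_le (n := n) u A
      omega
    · push Not at hneg
      have := ih hA fun v hv => by have := hneg v hv; omega
      omega

theorem sub_le_catalanRank_iff {A : Finset ℕ} (hA : A ⊆ Icc 1 (2 * n)) (t : ℕ) :
    (n : ℤ) - t ≤ catalanRank n A ↔ ∀ u ≤ 2 * n, -2 * (t : ℤ) ≤ ht A u :=
  ⟨fun h _ hu => not_lt.1 fun hlt => (catalanRank_lt_of_ht_lt hu hlt).not_ge h,
    sub_le_catalanRank_of_ht_ge hA t⟩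

lemma IsCatalanFlat.neg_two_mul_le_ht {A : Finset ℕ} {t z u : ℕ} (hA : IsCatalanFlat n A)
    (hr : (n : ℤ) - t - 1 ≤ catalanRank n A) (hz : z ∈ Icc 1 (2 * n)) (hzA : z ∉ A)
    (hu : u < z) : -2 * (t : ℤ) ≤ ht A u := by
  have hlt := hA.2 z hz hzA
  have hz' := mem_Icc.1 hz
  have hins := (sub_le_catalanRank_iff (insert_subset hz hA.1) t).1 (by omega) u (by omega)
  rwa [ht_insert hz'.1 hzA, if_neg (by omega), add_zero] at hins

end Rank

section Hyperplanes

def fillAfter (n : ℕ) (A : Finset ℕ) (x : ℕ) : Finset ℕ := A ∩ Icc 1 x ∪ Icc (x + 1) (2 * n)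

variable {n x : ℕ} {A : Finset ℕ}

lemma subset_fillAfter (hA : A ⊆ Icc 1 (2 * n)) : A ⊆ fillAfter n A x := by
  intro a ha
  have := mem_Icc.1 (hA ha)
  simp only [fillAfter, mem_union, mem_inter, mem_Icc]
  by_cases hax : a ≤ x <;> [exact Or.inl ⟨ha, this.1, hax⟩; exact Or.inr ⟨by omega, this.2⟩]

lemma ht_fillAfter_of_le {u : ℕ} (hu : u ≤ x) : ht (fillAfter n A x) u = ht A u := by
  have h : fillAfter n A x ∩ Icc 1 u = A ∩ Icc 1 u := by
    ext w
    simp only [fillAfter, mem_union, mem_inter, mem_Icc]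
    constructor
    · rintro ⟨⟨hwA, -⟩ | hw, hwu⟩
      exacts [⟨hwA, hwu⟩, by omega]
    · rintro ⟨hwA, hwu⟩
      exact ⟨Or.inl ⟨hwA, hwu.1, by omega⟩, hwu⟩
  rw [ht, ht, h]

lemma ht_fillAfter_of_ge {u : ℕ} (hxu : x ≤ u) (hu : u ≤ 2 * n) :
    ht (fillAfter n A x) u = ht A x + (u - x) := by
  induction u, hxu using Nat.le_induction with
  | base => rw [ht_fillAfter_of_le le_rfl]; ring
  | succ u hxu ih =>
    have hmem : u + 1 ∈ fillAfter n A x := mem_union_right _ (mem_Icc.2 ⟨by omega, hu⟩)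
    rw [ht_succ, ih (by omega), if_pos hmem]
    push_cast; ring

theorem isCatalanFlat_fillAfter (hA : A ⊆ Icc 1 (2 * n)) (hx : x ≤ 2 * n)
    (hhx : ht A x = -1) (h0 : ∀ u < x, 0 ≤ ht A u) :
    IsCatalanFlat n (fillAfter n A x) ∧ (catalanRank n (fillAfter n A x) : ℤ) = n - 1 := by
  have hsub : fillAfter n A x ⊆ Icc 1 (2 * n) :=
    union_subset (inter_subset_left.trans hA) (Icc_subset_Icc (by omega) le_rfl)
  have hge : ∀ u ≤ 2 * n, -1 ≤ ht (fillAfter n A x) u := by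
    intro u hu
    rcases lt_or_ge u x with hux | hxu
    · rw [ht_fillAfter_of_le hux.le]; have := h0 u hux; omega
    · rw [ht_fillAfter_of_ge hxu hu]; omega
  have hrank : (catalanRank n (fillAfter n A x) : ℤ) = n - 1 := by
    have hlt := catalanRank_lt_of_ht_lt (t := 0) hx (A := fillAfter n A x)
      (by rw [ht_fillAfter_of_le le_rfl]; omega)
    have hle := (sub_le_catalanRank_iff hsub 1).2 fun u hu => by have := hge u hu; omega
    omega
  refine ⟨⟨hsub, fun z hz hzF => ?_⟩, hrank⟩
  have hz' := mem_Icc.1 hz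
  have hzx : z ≤ x := by
    by_contra hxz
    exact hzF (mem_union_right _ (mem_Icc.2 ⟨by omega, hz'.2⟩))
  have hle := (sub_le_catalanRank_iff (insert_subset hz hsub) 0).2 fun u hu => by
    rw [ht_insert hz'.1 hzF]
    split_ifs with hzu
    · have := hge u hu; omega
    · rw [ht_fillAfter_of_le (by omega)]; have := h0 u (by omega); omega
  omega

/-- The three ingredients: `ht_A ≥ 0` before `y`, `ht_A ≥ -2` before the missing step `z`
(flatness), and `ht_A ≥ -4` everywhere (rank `n - 2`). -/
lemma le_catalanRank_insert_insert (hA : IsCatalanFlat n A)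
    (hrank : (catalanRank n A : ℤ) = n - 2) (hx : x ≤ 2 * n) (h0 : ∀ u < x, 0 ≤ ht A u)
    {y z : ℕ} (hy : y ∈ Icc 1 x) (hyA : y ∉ A) (hz : z ∈ Icc 1 (2 * n)) (hzA : z ∉ insert y A) :
    n ≤ catalanRank n (insert z (insert y A)) := by
  have hy' := mem_Icc.1 hy
  have hz' := mem_Icc.1 hz
  have h4 := (sub_le_catalanRank_iff hA.1 2).1 (by omega)
  have h2 : ∀ u < z, -2 * ((1 : ℕ) : ℤ) ≤ ht A u := fun u hu =>
    hA.neg_two_mul_le_ht (by omega) hz (fun h => hzA (mem_insert_of_mem h)) hu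
  have hsub : insert z (insert y A) ⊆ Icc 1 (2 * n) :=
    insert_subset hz (insert_subset (mem_Icc.2 ⟨hy'.1, by omega⟩) hA.1)
  have hle := (sub_le_catalanRank_iff hsub 0).2 fun u hu => by
    rw [ht_insert hz'.1 hzA, ht_insert hy'.1 hyA]
    have := h4 u hu
    have := h2 u
    have := h0 u
    split_ifs <;> omega
  omega

theorem isCatalanFlat_insert (hA : IsCatalanFlat n A) (hrank : (catalanRank n A : ℤ) = n - 2)
    (hx : x ≤ 2 * n) (h0 : ∀ u < x, 0 ≤ ht A u) {y : ℕ} (hy : y ∈ Icc 1 x) (hyA : y ∉ A) :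
    IsCatalanFlat n (insert y A) ∧ (catalanRank n (insert y A) : ℤ) = n - 1 := by
  have hy2n : y ∈ Icc 1 (2 * n) := Icc_subset_Icc le_rfl hx hy
  have hlt := hA.2 y hy2n hyA
  have hle := catalanRank_insert_le (n := n) y A
  refine ⟨⟨insert_subset hy2n hA.1, fun z hz hzA => ?_⟩, by omega⟩
  have := le_catalanRank_insert_insert hA hrank hx h0 hy hyA hz hzA
  omega

theorem eq_fillAfter_or_exists_eq_insert (hA : IsCatalanFlat n A)
    (hrank : (catalanRank n A : ℤ) = n - 2) (hx : x ≤ 2 * n) (hhx : ht A x = -1)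
    (h0 : ∀ u < x, 0 ≤ ht A u) {F : Finset ℕ} (hF : IsCatalanFlat n F)
    (hFr : (catalanRank n F : ℤ) = n - 1) (hAF : A ⊆ F) :
    F = fillAfter n A x ∨ ∃ y ∈ Icc 1 x \ A, F = insert y A := by
  by_cases hnew : ∃ y ∈ Icc 1 x \ A, y ∈ F
  · obtain ⟨y, hy, hyF⟩ := hnew
    refine Or.inr ⟨y, hy, Subset.antisymm (fun z hzF => ?_) (insert_subset hyF hAF)⟩
    by_contra hz
    rw [mem_sdiff] at hy
    have := le_catalanRank_insert_insert hA hrank hx h0 hy.1 hy.2 (hF.1 hzF) hz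
    have := catalanRank_mono (n := n) (insert_subset hzF (insert_subset hyF hAF))
    omega
  push Not at hnew
  have hinter : F ∩ Icc 1 x = A ∩ Icc 1 x := by
    refine Subset.antisymm (fun w hw => ?_) (inter_subset_inter_right hAF)
    rw [mem_inter] at hw ⊢
    exact ⟨by_contra fun hwA => hnew w (mem_sdiff.2 ⟨hw.2, hwA⟩) hw.1, hw.2⟩
  have hFx : ht F x = -1 := by rw [← hhx, ht, ht, hinter]
  left
  rw [fillAfter, ← hinter]
  ext w
  simp only [mem_union, mem_inter, mem_Icc]
  constructor
  · intro hwF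
    have hw := mem_Icc.1 (hF.1 hwF)
    rcases le_or_gt w x with hwx | hxw
    exacts [Or.inl ⟨hwF, hw.1, hwx⟩, Or.inr ⟨hxw, hw.2⟩]
  · rintro (⟨hwF, -⟩ | hw)
    · exact hwF
    · by_contra hwF
      have := hF.neg_two_mul_le_ht (t := 0) (by omega) (mem_Icc.2 ⟨by omega, hw.2⟩) hwF
        (show x < w by omega)
      omega

theorem setOf_cover_eq (hA : IsCatalanFlat n A) (hrank : (catalanRank n A : ℤ) = n - 2)
    (hx : x ≤ 2 * n) (hhx : ht A x = -1) (h0 : ∀ u < x, 0 ≤ ht A u) :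
    {F : Finset ℕ | IsCatalanFlat n F ∧ (catalanRank n F : ℤ) = n - 1 ∧ A ⊆ F} =
      ↑(insert (fillAfter n A x) ((Icc 1 x \ A).image (insert · A))) := by
  ext F
  simp only [Set.mem_ofPred_eq, coe_insert, coe_image, Set.mem_insert_iff, Set.mem_image,
    mem_coe]
  constructor
  · rintro ⟨hF, hFr, hAF⟩
    rcases eq_fillAfter_or_exists_eq_insert hA hrank hx hhx h0 hF hFr hAF with h | ⟨y, hy, rfl⟩
    exacts [Or.inl h, Or.inr ⟨y, hy, rfl⟩]
  · rintro (rfl | ⟨y, hy, rfl⟩)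
    · obtain ⟨hF, hFr⟩ := isCatalanFlat_fillAfter hA.1 hx hhx h0
      exact ⟨hF, hFr, subset_fillAfter hA.1⟩
    · rw [mem_sdiff] at hy
      obtain ⟨hF, hFr⟩ := isCatalanFlat_insert hA hrank hx h0 hy.1 hy.2
      exact ⟨hF, hFr, subset_insert _ _⟩

lemma fillAfter_notMem_image_insert : fillAfter n A x ∉ (Icc 1 x \ A).image (insert · A) := by
  rw [mem_image]
  rintro ⟨y, hy, hF⟩
  rw [mem_sdiff, mem_Icc] at hy
  have hyF : y ∈ fillAfter n A x := hF ▸ mem_insert_self y A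
  rcases mem_union.1 hyF with hyA | hxy
  exacts [hy.2 (mem_inter.1 hyA).1, by rw [mem_Icc] at hxy; omega]

end Hyperplanes

theorem catalan_flat_cover_count_general (n : ℕ) (A : Finset ℕ)
    (hA : IsCatalanFlat n A) (hrank : (catalanRank n A : ℤ) = (n : ℤ) - 2)
    (x : ℕ) (hx : x ≤ 2 * n) (hhx : ht A x = -1) (hxmin : ∀ y < x, ht A y ≠ -1) :
    2 * {F : Finset ℕ | IsCatalanFlat n F ∧ (catalanRank n F : ℤ) = (n : ℤ) - 1 ∧
          A ⊆ F}.ncard = x + 3 := by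
  have hinj : Set.InjOn (insert · A) ↑(Icc 1 x \ A) := fun y hy _ _ h =>
    (insert_inj (mem_sdiff.1 hy).2).1 h
  rw [setOf_cover_eq hA hrank hx hhx (ht_nonneg_of_forall_ne_neg_one hxmin),
    Set.ncard_coe_finset, card_insert_of_notMem fillAfter_notMem_image_insert,
    card_image_of_injOn hinj]
  have hcard := card_sdiff_add_card_inter (Icc 1 x) A
  rw [inter_comm, Nat.card_Icc] at hcard
  unfold ht at hhx
  omega

/-- Let `A` be a flat of the Catalan matroid of rank `n − 2`, and let `x` be the
smallest integer with `ht_A(x) = −1`.  Then the number of rank-`(n−1)` flats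
containing `A` is exactly `(x + 3)/2` (stated as: twice the number equals `x + 3`). -/
theorem catalan_flat_cover_count (n : ℕ) (hn : 0 < n) (A : Finset ℕ)
    (hA : IsCatalanFlat n A) (hrank : (catalanRank n A : ℤ) = (n : ℤ) - 2)
    (x : ℕ) (hx : x ≤ 2 * n) (hhx : ht A x = -1) (hxmin : ∀ y < x, ht A y ≠ -1) :
    2 * {F : Finset ℕ | IsCatalanFlat n F ∧ (catalanRank n F : ℤ) = (n : ℤ) - 1 ∧
          A ⊆ F}.ncard = x + 3 :=
  catalan_flat_cover_count_general n A hA hrank x hx hhx hxmin
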